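/- For the zigzag map Z, the bits generated by the rule 'output 1 at step i if |Z^[i](x)| > 1/2 and 0 otherwise' are uniform: for every k ∈ ℕ and every bit pattern b : Fin k → Bool, the Lebesgue measure of the set {x ∈ [-1,1] : for all i < k, (|Z^[i](x)| > 1/2) ↔ b(i) = 1} equals 2 · (1/2)^k. In particular, under the uniform distribution on [-1,1], every length-k output bit string has probability 2^{-k}, so the generated bits are unbiased and independent. -/
import Mathlib


open MeasureTheory

/-- The zigzag map: `Z x = 2x + 2` for `x < -1/2`, `Z x = -2x` for `-1/2 ≤ x ≤ 1/2`,
and `Z x = 2x - 2` for `x > 1/2`. -/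
noncomputable def zigzagMap (x : ℝ) : ℝ :=
  if x < -(1/2) then 2*x + 2 else if x ≤ 1/2 then -2*x else 2*x - 2

/-- The tent map on `[0,1]`. -/
noncomputable def tentMap (y : ℝ) : ℝ :=
  if y ≤ 1/2 then 2*y else 2 - 2*y

lemma tentMap_measurable : Measurable tentMap := by
  unfold tentMap
  exact Measurable.ite (measurableSet_le measurable_id measurable_const)
    (by fun_prop) (by fun_prop)

lemma tentMap_mem {y : ℝ} (hy : y ∈ Set.Icc (0:ℝ) 1) : tentMap y ∈ Set.Icc (0:ℝ) 1 := by
  obtain ⟨h0, h1⟩ := hy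
  unfold tentMap
  split_ifs with h <;> constructor <;> linarith

lemma abs_zigzag {x : ℝ} (h1 : -1 ≤ x) (h2 : x ≤ 1) : |zigzagMap x| = tentMap |x| := by
  unfold zigzagMap tentMap
  rcases lt_or_ge x (-(1/2)) with hx | hx
  · rw [if_pos hx, if_neg (by rw [abs_of_neg (by linarith : x < 0)]; linarith),
      abs_of_neg (by linarith : x < 0), abs_of_nonneg (by linarith : (0:ℝ) ≤ 2*x + 2)]
    ring
  · rcases le_or_gt x (1/2) with hx2 | hx2
    · rw [if_neg (not_lt.2 hx), if_pos hx2,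
        if_pos (abs_le.2 ⟨by linarith, hx2⟩),
        show (-2*x : ℝ) = -(2*x) from by ring, abs_neg, abs_mul, abs_two]
    · rw [if_neg (not_lt.2 hx), if_neg (not_le.2 hx2),
        abs_of_nonneg (by linarith : (0:ℝ) ≤ x),
        if_neg (not_le.2 hx2), abs_of_nonpos (by linarith : (2*x - 2 : ℝ) ≤ 0)]
      ring

lemma zigzag_mem {x : ℝ} (hx : x ∈ Set.Icc (-1:ℝ) 1) : zigzagMap x ∈ Set.Icc (-1:ℝ) 1 := by
  obtain ⟨h1, h2⟩ := hx
  have h := abs_zigzag h1 h2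
  have := tentMap_mem (y := |x|) ⟨abs_nonneg x, abs_le.2 ⟨h1, h2⟩⟩
  rw [← h] at this
  exact ⟨neg_le_of_abs_le this.2, le_of_abs_le this.2⟩

lemma iterate_abs : ∀ (n : ℕ) (x : ℝ), x ∈ Set.Icc (-1:ℝ) 1 →
    |zigzagMap^[n] x| = tentMap^[n] |x| := by
  intro n
  induction n with
  | zero => intro x _; simp
  | succ n ih =>
    intro x hx
    rw [Function.iterate_succ_apply, Function.iterate_succ_apply,
      ih _ (zigzag_mem hx), abs_zigzag hx.1 hx.2]

/-- The set of points in `[0,1]` with tent-map itinerary `b`. -/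
def tentSet (k : ℕ) (b : Fin k → Bool) : Set ℝ :=
  {y ∈ Set.Icc (0:ℝ) 1 | ∀ i : Fin k, (1/2 < tentMap^[(i : ℕ)] y ↔ b i = true)}

lemma tentSet_subset (k : ℕ) (b : Fin k → Bool) : tentSet k b ⊆ Set.Icc (0:ℝ) 1 :=
  fun _ hy => hy.1

lemma tentSet_measurable (k : ℕ) (b : Fin k → Bool) : MeasurableSet (tentSet k b) := by
  have : tentSet k b =
      Set.Icc (0:ℝ) 1 ∩ ⋂ i : Fin k, tentMap^[(i:ℕ)] ⁻¹' {z : ℝ | 1/2 < z ↔ b i = true} := by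
    ext y
    simp [tentSet, Set.mem_iInter, Set.mem_preimage, and_comm]
  rw [this]
  refine measurableSet_Icc.inter (MeasurableSet.iInter fun i => ?_)
  refine (tentMap_measurable.iterate _) ?_
  cases hbi : b i
  · have : {z : ℝ | 1/2 < z ↔ false = true} = (Set.Ioi (1/2 : ℝ))ᶜ := by
      ext z; simp
    rw [this]
    exact measurableSet_Ioi.compl
  · have : {z : ℝ | 1/2 < z ↔ true = true} = Set.Ioi (1/2 : ℝ) := by
      ext z; simp
    rw [this]
    exact measurableSet_Ioi

lemma ofReal_half : ENNReal.ofReal |(2:ℝ)⁻¹| = (1/2 : ENNReal) := by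
  rw [show |(2:ℝ)⁻¹| = (2:ℝ)⁻¹ from abs_of_pos (by norm_num),
    ENNReal.ofReal_inv_of_pos (by norm_num), ENNReal.ofReal_ofNat, one_div]

lemma tentSet_volume : ∀ (k : ℕ) (b : Fin k → Bool),
    volume (tentSet k b) = (1/2 : ENNReal)^k := by
  intro k
  induction k with
  | zero =>
    intro b
    have : tentSet 0 b = Set.Icc (0:ℝ) 1 := by
      ext y; simp [tentSet]
    rw [this]
    simp
  | succ k ih =>
    intro b
    cases hb0 : b 0
    · -- first bit 0 : y ≤ 1/2, tent y = 2y
      have hset : tentSet (k+1) b = ((2:ℝ) * ·) ⁻¹' tentSet k (fun i => b i.succ) := by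
        ext y
        simp only [tentSet, Set.mem_setOf_eq, Set.mem_preimage, Set.mem_Icc]
        constructor
        · rintro ⟨⟨h0, h1⟩, h⟩
          have hy2 : y ≤ 1/2 := by
            have := h 0
            simp [hb0] at this
            simpa using this
          have hty : tentMap y = 2*y := by unfold tentMap; rw [if_pos hy2]
          refine ⟨⟨by linarith, by linarith⟩, fun i => ?_⟩
          have := h i.succ
          rwa [Fin.val_succ, Function.iterate_succ_apply, hty] at this
        · rintro ⟨⟨h0, h1⟩, h⟩
          have hy0 : 0 ≤ y := by linarith
          have hy2 : y ≤ 1/2 := by linarith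
          have hty : tentMap y = 2*y := by unfold tentMap; rw [if_pos hy2]
          refine ⟨⟨hy0, by linarith⟩, fun i => ?_⟩
          refine Fin.cases ?_ (fun j => ?_) i
          · simpa [hb0] using not_lt.2 hy2
          · have := h j
            rw [Fin.val_succ, Function.iterate_succ_apply, hty]
            exact this
      rw [hset, Real.volume_preimage_mul_left (by norm_num : (2:ℝ) ≠ 0), ih, ofReal_half,
        pow_succ, mul_comm]
    · -- first bit 1 : y > 1/2, tent y = 2 - 2y
      have hset : tentSet (k+1) b =
          ((fun y : ℝ => 2 - 2*y) ⁻¹' tentSet k (fun i => b i.succ)) \ {(1/2 : ℝ)} := by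
        ext y
        simp only [tentSet, Set.mem_setOf_eq, Set.mem_preimage, Set.mem_Icc, Set.mem_diff,
          Set.mem_singleton_iff]
        constructor
        · rintro ⟨⟨h0, h1⟩, h⟩
          have hy : 1/2 < y := by
            have := (h 0).2
            rw [hb0] at this
            simpa using this rfl
          have hty : tentMap y = 2 - 2*y := by unfold tentMap; rw [if_neg (not_le.2 hy)]
          refine ⟨⟨⟨by linarith, by linarith⟩, fun i => ?_⟩, by intro hc; rw [hc] at hy; linarith⟩
          have := h i.succ
          rwa [Fin.val_succ, Function.iterate_succ_apply, hty] at this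
        · rintro ⟨⟨⟨h0, h1⟩, h⟩, hne⟩
          have hy1 : y ≤ 1 := by linarith
          have hy2 : 1/2 ≤ y := by linarith
          have hy : 1/2 < y := lt_of_le_of_ne hy2 (fun hc => hne hc.symm)
          have hty : tentMap y = 2 - 2*y := by unfold tentMap; rw [if_neg (not_le.2 hy)]
          refine ⟨⟨by linarith, hy1⟩, fun i => ?_⟩
          refine Fin.cases ?_ (fun j => ?_) i
          · simpa [hb0] using hy
          · have := h j
            rw [Fin.val_succ, Function.iterate_succ_apply, hty]
            exact this
      have hcomp : (fun y : ℝ => 2 - 2*y) = (fun z : ℝ => z + 2) ∘ (((-2):ℝ) * ·) := by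
        funext y; simp [Function.comp]; ring
      rw [hset, measure_diff_null (measure_singleton _), hcomp, Set.preimage_comp,
        Real.volume_preimage_mul_left (by norm_num : ((-2):ℝ) ≠ 0),
        measure_preimage_add_right volume 2 _, ih,
        show |((-2):ℝ)⁻¹| = |(2:ℝ)⁻¹| from by rw [abs_inv, abs_inv, abs_neg],
        ofReal_half, pow_succ, mul_comm]

/-- The bits generated from the zigzag map by the rule "output `1` at step `i` iff
`|Z^[i] x| > 1/2`" are uniform: for every `k` and every bit pattern `b : Fin k → Bool`,
the Lebesgue measure of the set of `x ∈ [-1,1]` producing pattern `b` equals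
`2 * (1/2)^k`; under the uniform distribution on `[-1,1]` every length-`k` bit string
has probability `2⁻ᵏ`, so the bits are unbiased and independent. -/
theorem zigzagMap_bits_uniform :
    ∀ k : ℕ, ∀ b : Fin k → Bool,
      volume {x ∈ Set.Icc (-1:ℝ) 1 |
        ∀ i : Fin k, (1/2 < |zigzagMap^[(i : ℕ)] x| ↔ b i = true)} =
      2 * (1/2 : ENNReal)^k := by
  intro k b
  have habs : {x ∈ Set.Icc (-1:ℝ) 1 |
      ∀ i : Fin k, (1/2 < |zigzagMap^[(i : ℕ)] x| ↔ b i = true)} =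
      (tentSet k b \ {0}) ∪ (((-1:ℝ)) * ·) ⁻¹' tentSet k b := by
    ext x
    have hmain : (x ∈ Set.Icc (-1:ℝ) 1 ∧
        ∀ i : Fin k, (1/2 < |zigzagMap^[(i : ℕ)] x| ↔ b i = true)) ↔ |x| ∈ tentSet k b := by
      constructor
      · rintro ⟨hx, h⟩
        refine ⟨⟨abs_nonneg x, abs_le.2 ⟨hx.1, hx.2⟩⟩, fun i => ?_⟩
        rw [← iterate_abs _ _ hx]
        exact h i
      · rintro ⟨⟨_, h1⟩, h⟩
        have hx : x ∈ Set.Icc (-1:ℝ) 1 := ⟨neg_le_of_abs_le h1, le_of_abs_le h1⟩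
        refine ⟨hx, fun i => ?_⟩
        rw [iterate_abs _ _ hx]
        exact h i
    simp only [Set.mem_setOf_eq, Set.mem_union, Set.mem_diff, Set.mem_preimage,
      Set.mem_singleton_iff]
    rw [hmain]
    constructor
    · intro h
      rcases le_or_gt x 0 with hx | hx
      · right
        rwa [neg_one_mul, ← abs_of_nonpos hx]
      · left
        rw [abs_of_pos hx] at h
        exact ⟨h, ne_of_gt hx⟩
    · rintro (⟨h, hne⟩ | h)
      · have hx : 0 < x := lt_of_le_of_ne (tentSet_subset k b h).1 (Ne.symm hne)
        rwa [abs_of_pos hx]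
      · rw [neg_one_mul] at h
        have hx : x ≤ 0 := by
          have := (tentSet_subset k b h).1
          linarith
        rwa [abs_of_nonpos hx]
  rw [habs, measure_union, measure_diff_null (measure_singleton _),
    Real.volume_preimage_mul_left (by norm_num : ((-1):ℝ) ≠ 0), tentSet_volume]
  · rw [show |((-1):ℝ)⁻¹| = 1 from by norm_num, ENNReal.ofReal_one, one_mul, two_mul]
  · rw [Set.disjoint_left]
    rintro x ⟨hx1, hne⟩ hx2
    have h1 : 0 < x := lt_of_le_of_ne (tentSet_subset k b hx1).1 (Ne.symm hne)
    have h2 : 0 ≤ -1 * x := (tentSet_subset k b hx2).1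
    nlinarith
  · exact (tentSet_measurable k b).preimage (measurable_const_mul _)
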